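/- arXiv:1802.09572 — 2 statements merged into one kernel-verified Lean document; each statement's English description precedes it below -/
import Mathlib

section
/- Let n ≥ 2, q ≠ 0, let φ:(0,∞)→(0,∞) be continuous with φ_q(t) := φ(t^{1/q}) strictly convex, and let ρ_K, ρ_L, ρ_Q ∈ C(S^{n-1}) be strictly positive. Suppose Ṽ_{q,φ}(K,M,Q) = Ṽ_{q,φ}(L,M,Q) for every star body M (i.e., every strictly positive ρ_M ∈ C(S^{n-1})). Then ρ_K = ρ_L, i.e., K = L. -/
open MeasureTheory Metric Set Filter
open scoped RealInnerProductSpace NNReal ENNReal Topology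

noncomputable section

abbrev Euc (n : ℕ) := EuclideanSpace ℝ (Fin n)

def usphere (n : ℕ) : Set (Euc n) := Metric.sphere 0 1

def smeas (n : ℕ) : Measure (Euc n) := (μH[(n : ℝ) - 1]).restrict (usphere n)


def Vq (n : ℕ) (q : ℝ) (ρK ρQ : Euc n → ℝ) : ℝ :=
  (1/(n:ℝ)) * ∫ u, ρK u ^ q * ρQ u ^ ((n:ℝ) - q) ∂smeas n

def Vqφ (n : ℕ) (q : ℝ) (φ : ℝ → ℝ) (ρK ρL ρQ : Euc n → ℝ) : ℝ :=
  (1/(n:ℝ)) * ∫ u, φ (ρL u / ρK u) * ρK u ^ q * ρQ u ^ ((n:ℝ) - q) ∂smeas n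


/-!
Testing the hypothesis with `M = L` and `M = K`, and using `Ṽ_{q,φ}(K, K, Q) = φ(1) Ṽ_q(K, Q)`,
gives `Ṽ_{q,φ}(K, L, Q) = φ(1) Ṽ_q(L, Q)` and `Ṽ_{q,φ}(L, K, Q) = φ(1) Ṽ_q(K, Q)`. The dual
Orlicz–Minkowski inequality `Ṽ_q(K, Q) φ_q(Ṽ_q(L, Q) / Ṽ_q(K, Q)) ≤ Ṽ_{q,φ}(K, L, Q)` is Jensen's
inequality for `φ_q` and the function `(ρ_L / ρ_K)^q`, averaged against `ρ_K^q ρ_Q^{n-q} du`.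
With `a = Ṽ_q(K, Q)` and `b = Ṽ_q(L, Q)` it yields `a φ_q(b / a) ≤ b φ_q(1)` and
`b φ_q(a / b) ≤ a φ_q(1)`; as `1` is a proper convex combination of `b / a` and `a / b`, strict
convexity forces `a = b`. Then Jensen's inequality is an equality, so `(ρ_L / ρ_K)^q` is a.e.
constant, and being continuous on a sphere whose caps have positive measure, it is identically `1`.

Finiteness of the Hausdorff measure of the sphere comes from covering it by finitely many Lipschitz
graphs over coordinate hyperplanes; positivity on caps from projecting a cap onto such a hyperplane.
-/

lemma hausdorffMeasure_euc_eq_volume_image (m : ℕ) (s : Set (Euc m)) :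
    μH[(m : ℝ)] (WithLp.ofLp '' s) = volume (WithLp.ofLp '' s) := by
  rw [← hausdorffMeasure_pi_real, Fintype.card_fin]

lemma hausdorffMeasure_lt_top_of_isBounded {m : ℕ} {s : Set (Euc m)}
    (hs : Bornology.IsBounded s) : μH[(m : ℝ)] s < ∞ := by
  refine ((PiLp.antilipschitzWith_ofLp 2 _).le_hausdorffMeasure_image m.cast_nonneg s).trans_lt ?_
  rw [hausdorffMeasure_euc_eq_volume_image]
  exact ENNReal.mul_lt_top (by finiteness)
    ((PiLp.lipschitzWith_ofLp 2 _).isBounded_image hs).measure_lt_top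

lemma hausdorffMeasure_ball_pos {m : ℕ} (z : Euc m) {δ : ℝ} (hδ : 0 < δ) :
    0 < μH[(m : ℝ)] (ball z δ) := by
  have hopen : IsOpen (WithLp.ofLp '' ball z δ) :=
    (EuclideanSpace.equiv (Fin m) ℝ).toHomeomorph.isOpenMap _ isOpen_ball
  have hle := (PiLp.lipschitzWith_ofLp 2 (fun _ : Fin m => ℝ)).hausdorffMeasure_image_le
    m.cast_nonneg (ball z δ)
  rw [hausdorffMeasure_euc_eq_volume_image, ENNReal.coe_one, ENNReal.one_rpow, one_mul] at hle
  exact (hopen.measure_pos volume ((nonempty_ball.2 hδ).image _)).trans_le hle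

section Graph
variable {m : ℕ}

def removeCoord (i : Fin (m + 1)) (x : Euc (m + 1)) : Euc m := WithLp.toLp 2 (i.removeNth x.ofLp)

def graphOver (i : Fin (m + 1)) (h : Euc m → ℝ) (z : Euc m) : Euc (m + 1) :=
  WithLp.toLp 2 (i.insertNth (h z) z.ofLp)

@[simp] lemma removeCoord_graphOver (i : Fin (m + 1)) (h : Euc m → ℝ) (z : Euc m) :
    removeCoord i (graphOver i h z) = z := by
  simp [removeCoord, graphOver]

@[simp] lemma graphOver_apply_self (i : Fin (m + 1)) (h : Euc m → ℝ) (z : Euc m) :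
    graphOver i h z i = h z := by
  simp [graphOver]

lemma graphOver_removeCoord {i : Fin (m + 1)} {h : Euc m → ℝ} {x : Euc (m + 1)}
    (hx : h (removeCoord i x) = x i) : graphOver i h (removeCoord i x) = x := by
  rw [graphOver, hx]
  exact congrArg (WithLp.toLp 2) (Fin.insertNth_self_removeNth i x.ofLp)

lemma norm_sq_eq_sq_add_norm_removeCoord_sq (i : Fin (m + 1)) (x : Euc (m + 1)) :
    ‖x‖ ^ 2 = x i ^ 2 + ‖removeCoord i x‖ ^ 2 := by
  simp only [EuclideanSpace.norm_sq_eq, Fin.sum_univ_succAbove _ i, Real.norm_eq_abs, sq_abs]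
  rfl

lemma removeCoord_sub (i : Fin (m + 1)) (x y : Euc (m + 1)) :
    removeCoord i (x - y) = removeCoord i x - removeCoord i y := rfl

lemma dist_sq_eq_sq_add_dist_removeCoord_sq (i : Fin (m + 1)) (x y : Euc (m + 1)) :
    dist x y ^ 2 = dist (x i) (y i) ^ 2 + dist (removeCoord i x) (removeCoord i y) ^ 2 := by
  rw [dist_eq_norm, dist_eq_norm, dist_eq_norm, ← removeCoord_sub,
    norm_sq_eq_sq_add_norm_removeCoord_sq i, Real.norm_eq_abs, sq_abs]
  rfl

lemma lipschitzWith_removeCoord (i : Fin (m + 1)) : LipschitzWith 1 (removeCoord (m := m) i) :=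
  LipschitzWith.of_dist_le_mul fun x y => by
    rw [NNReal.coe_one, one_mul]
    refine le_of_sq_le_sq ?_ dist_nonneg
    nlinarith [dist_sq_eq_sq_add_dist_removeCoord_sq i x y, sq_nonneg (dist (x i) (y i))]

lemma LipschitzOnWith.graphOver {K : ℝ≥0} {h : Euc m → ℝ} {s : Set (Euc m)}
    (hh : LipschitzOnWith K h s) (i : Fin (m + 1)) :
    LipschitzOnWith (K + 1) (_root_.graphOver i h) s := by
  refine LipschitzOnWith.of_dist_le_mul fun z hz w hw => ?_
  have hzw := hh.dist_le_mul z hz w hw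
  have key :=
    dist_sq_eq_sq_add_dist_removeCoord_sq i (_root_.graphOver i h z) (_root_.graphOver i h w)
  simp only [graphOver_apply_self, removeCoord_graphOver] at key
  refine le_of_sq_le_sq ?_ (by positivity)
  push_cast
  nlinarith [dist_nonneg (x := h z) (y := h w), dist_nonneg (x := z) (y := w), K.coe_nonneg]

lemma continuous_graphOver (i : Fin (m + 1)) {h : Euc m → ℝ} (hh : Continuous h) :
    Continuous (graphOver i h) :=
  (PiLp.continuous_toLp 2 _).comp (hh.finInsertNth i (PiLp.continuous_ofLp 2 _))

end Graph

section SphereCharts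
variable {m : ℕ}

def sphereHeight (σ : ℝ) (z : Euc m) : ℝ := σ * √(1 - ‖z‖ ^ 2)

lemma graphOver_sphereHeight_mem_sphere (i : Fin (m + 1)) {σ : ℝ} (hσ : |σ| = 1) {z : Euc m}
    (hz : ‖z‖ ≤ 1) : graphOver i (sphereHeight σ) z ∈ sphere (0 : Euc (m + 1)) 1 := by
  have hsq : ‖graphOver i (sphereHeight σ) z‖ ^ 2 = 1 := by
    have h1 : 0 ≤ 1 - ‖z‖ ^ 2 := by nlinarith [norm_nonneg z]
    rw [norm_sq_eq_sq_add_norm_removeCoord_sq i, graphOver_apply_self, removeCoord_graphOver,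
      sphereHeight, mul_pow, ← sq_abs σ, hσ, Real.sq_sqrt h1]
    ring
  rwa [mem_sphere_zero_iff_norm, ← pow_eq_one_iff_of_nonneg (norm_nonneg _) two_ne_zero]

lemma sphereHeight_sign_removeCoord {x : Euc (m + 1)} (hx : ‖x‖ = 1) (i : Fin (m + 1)) :
    sphereHeight (SignType.sign (x i)) (removeCoord i x) = x i := by
  have h := norm_sq_eq_sq_add_norm_removeCoord_sq i x
  rw [hx, one_pow] at h
  rw [sphereHeight, show 1 - ‖removeCoord i x‖ ^ 2 = x i ^ 2 by linarith, Real.sqrt_sq_eq_abs,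
    sign_mul_abs]

lemma lipschitzOnWith_sphereHeight {σ : ℝ} (hσ : |σ| ≤ 1) {c : ℝ} (hc : 0 < c) :
    LipschitzOnWith (Real.toNNReal (√c)⁻¹) (sphereHeight (m := m) σ) {z | c ≤ 1 - ‖z‖ ^ 2} := by
  refine LipschitzOnWith.of_dist_le' fun z hz w hw => ?_
  set a := √(1 - ‖z‖ ^ 2)
  set b := √(1 - ‖w‖ ^ 2)
  have ha : a ^ 2 = 1 - ‖z‖ ^ 2 := Real.sq_sqrt (hc.le.trans hz)
  have hb : b ^ 2 = 1 - ‖w‖ ^ 2 := Real.sq_sqrt (hc.le.trans hw)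
  have hac : √c ≤ a := Real.sqrt_le_sqrt hz
  have hbc : √c ≤ b := Real.sqrt_le_sqrt hw
  have hz1 : ‖z‖ ≤ 1 := by nlinarith [norm_nonneg z]
  have hw1 : ‖w‖ ≤ 1 := by nlinarith [norm_nonneg w]
  have hsc : 0 < √c := Real.sqrt_pos.2 hc
  -- `(a - b) (a + b) = ‖w‖² - ‖z‖² = (‖w‖ - ‖z‖) (‖w‖ + ‖z‖)`
  have hfactor : |a - b| * (a + b) = |‖w‖ - ‖z‖| * (‖w‖ + ‖z‖) := by
    rw [← abs_of_pos (by linarith : 0 < a + b), ← abs_mul,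
      ← abs_of_nonneg (by positivity : 0 ≤ ‖w‖ + ‖z‖), ← abs_mul]
    congr 1
    nlinarith
  have hnorm : |‖w‖ - ‖z‖| ≤ dist z w := by
    rw [dist_comm]; exact abs_norm_sub_norm_le w z
  have hab : |a - b| * √c ≤ dist z w := by
    nlinarith [abs_nonneg (a - b), abs_nonneg (‖w‖ - ‖z‖), norm_nonneg z, norm_nonneg w]
  calc dist (sphereHeight σ z) (sphereHeight σ w) = |σ| * |a - b| := by
        rw [Real.dist_eq, sphereHeight, sphereHeight, ← mul_sub, abs_mul]
    _ ≤ |a - b| := mul_le_of_le_one_left (abs_nonneg _) hσ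
    _ ≤ (√c)⁻¹ * dist z w := by rw [inv_mul_eq_div, le_div_iff₀ hsc]; exact hab

lemma sphere_subset_iUnion_graphOver :
    sphere (0 : Euc (m + 1)) 1 ⊆ ⋃ (i : Fin (m + 1)) (σ : SignType),
      graphOver i (sphereHeight σ) '' {z | 1 / (m + 1 : ℝ) ≤ 1 - ‖z‖ ^ 2} := by
  intro x hx
  rw [mem_sphere_zero_iff_norm] at hx
  obtain ⟨i, hi⟩ := Finite.exists_max fun k => x k ^ 2
  -- the largest of the `m + 1` squared coordinates is at least their mean `1 / (m + 1)`
  have hmean : 1 ≤ (m + 1 : ℝ) * x i ^ 2 := by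
    have hsum : ∑ k, x k ^ 2 = 1 := by
      simpa [EuclideanSpace.norm_sq_eq, hx] using (EuclideanSpace.norm_sq_eq x).symm
    have := Finset.sum_le_card_nsmul Finset.univ (fun k => x k ^ 2) (x i ^ 2) fun k _ => hi k
    simpa [hsum] using this
  have hnorm := norm_sq_eq_sq_add_norm_removeCoord_sq i x
  rw [hx] at hnorm
  refine mem_iUnion₂.2 ⟨i, SignType.sign (x i), removeCoord i x, ?_,
    graphOver_removeCoord (sphereHeight_sign_removeCoord hx i)⟩
  change 1 / (m + 1 : ℝ) ≤ 1 - ‖removeCoord i x‖ ^ 2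
  rw [div_le_iff₀ (by positivity)]
  nlinarith

lemma hausdorffMeasure_sphere_lt_top (m : ℕ) : μH[(m : ℝ)] (sphere (0 : Euc (m + 1)) 1) < ∞ := by
  have hc : (0 : ℝ) < 1 / (m + 1) := by positivity
  have hbdd : Bornology.IsBounded {z : Euc m | 1 / (m + 1 : ℝ) ≤ 1 - ‖z‖ ^ 2} :=
    (isBounded_closedBall (x := 0) (r := 1)).subset fun z hz => by
      rw [mem_closedBall_zero_iff]
      nlinarith [norm_nonneg z, show 1 / (m + 1 : ℝ) ≤ 1 - ‖z‖ ^ 2 from hz]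
  refine (measure_mono sphere_subset_iUnion_graphOver).trans_lt ?_
  refine (measure_iUnion_fintype_le _ _).trans_lt (ENNReal.sum_lt_top.2 fun i _ => ?_)
  refine (measure_iUnion_fintype_le _ _).trans_lt (ENNReal.sum_lt_top.2 fun σ _ => ?_)
  have hσ : |(σ : ℝ)| ≤ 1 := by cases σ <;> simp
  refine (((lipschitzOnWith_sphereHeight hσ hc).graphOver i).hausdorffMeasure_image_le
    m.cast_nonneg).trans_lt ?_
  exact ENNReal.mul_lt_top (by finiteness) (hausdorffMeasure_lt_top_of_isBounded hbdd)

lemma hausdorffMeasure_ball_inter_sphere_pos {x : Euc (m + 1)} (hx : x ∈ sphere 0 1) {ε : ℝ}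
    (hε : 0 < ε) : 0 < μH[(m : ℝ)] (ball x ε ∩ sphere 0 1) := by
  rw [mem_sphere_zero_iff_norm] at hx
  obtain ⟨i, hi⟩ : ∃ i, x i ≠ 0 := by
    by_contra! h
    have hx0 : x = 0 := by ext j; exact h j
    simp [hx0] at hx
  have hσ : |(SignType.sign (x i) : ℝ)| = 1 := by
    rcases hi.lt_or_gt with h | h
    · simp [sign_neg h]
    · simp [sign_pos h]
  set F := graphOver i (sphereHeight (SignType.sign (x i)))
  have hF : Continuous F := continuous_graphOver i (by unfold sphereHeight; fun_prop)
  have hFx : F (removeCoord i x) = x := graphOver_removeCoord (sphereHeight_sign_removeCoord hx i)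
  have hnorm := norm_sq_eq_sq_add_norm_removeCoord_sq i x
  rw [hx] at hnorm
  have hmem : removeCoord i x ∈ F ⁻¹' ball x ε ∩ ball 0 1 := by
    refine ⟨by simp [hFx, hε], mem_ball_zero_iff.2 ?_⟩
    nlinarith [pow_pos (abs_pos.2 hi) 2, sq_abs (x i), norm_nonneg (removeCoord i x)]
  obtain ⟨δ, hδ, hball⟩ :=
    Metric.isOpen_iff.1 ((isOpen_ball.preimage hF).inter isOpen_ball) _ hmem
  have hsub : F ⁻¹' ball x ε ∩ ball 0 1 ⊆ removeCoord i '' (ball x ε ∩ sphere 0 1) :=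
    fun z hz => ⟨F z, ⟨hz.1, graphOver_sphereHeight_mem_sphere i hσ (mem_ball_zero_iff.1 hz.2).le⟩,
      removeCoord_graphOver _ _ _⟩
  calc 0 < μH[(m : ℝ)] (ball (removeCoord i x) δ) := hausdorffMeasure_ball_pos _ hδ
    _ ≤ μH[(m : ℝ)] (removeCoord i '' (ball x ε ∩ sphere 0 1)) := measure_mono (hball.trans hsub)
    _ ≤ μH[(m : ℝ)] (ball x ε ∩ sphere 0 1) := by
      simpa using (lipschitzWith_removeCoord i).hausdorffMeasure_image_le m.cast_nonneg
        (ball x ε ∩ sphere 0 1)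

end SphereCharts

lemma usphere_zero : usphere 0 = ∅ :=
  eq_empty_of_forall_notMem fun x hx => by
    simp [usphere, Subsingleton.elim x 0] at hx

lemma pos_of_usphere_nonempty {n : ℕ} (hne : (usphere n).Nonempty) : 0 < n :=
  Nat.pos_of_ne_zero <| by rintro rfl; simp [usphere_zero] at hne

lemma smeas_succ (m : ℕ) : smeas (m + 1) = (μH[(m : ℝ)]).restrict (sphere 0 1) := by
  rw [smeas, usphere]
  push_cast
  rw [add_sub_cancel_right]

instance (n : ℕ) : IsFiniteMeasure (smeas n) := by
  rcases n with _ | m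
  · rw [smeas, usphere_zero, Measure.restrict_empty]
    infer_instance
  · rw [smeas_succ, isFiniteMeasure_restrict]
    exact (hausdorffMeasure_sphere_lt_top m).ne

lemma smeas_ball_pos {n : ℕ} {u : Euc n} (hu : u ∈ usphere n) {ε : ℝ} (hε : 0 < ε) :
    0 < smeas n (ball u ε) := by
  rcases n with _ | m
  · simp [usphere_zero] at hu
  · rw [smeas_succ, Measure.restrict_apply measurableSet_ball]
    exact hausdorffMeasure_ball_inter_sphere_pos hu hε

lemma ae_smeas_of_forall {n : ℕ} {p : Euc n → Prop} (h : ∀ u ∈ usphere n, p u) :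
    ∀ᵐ u ∂smeas n, p u :=
  ae_restrict_of_forall_mem isClosed_sphere.measurableSet h

lemma integrable_smeas {n : ℕ} {f : Euc n → ℝ} (hf : ContinuousOn f (usphere n)) :
    Integrable f (smeas n) := by
  obtain ⟨C, hC⟩ := (isCompact_sphere (0 : Euc n) 1).exists_bound_of_continuousOn hf
  exact .of_bound (hf.aestronglyMeasurable isClosed_sphere.measurableSet) C (ae_smeas_of_forall hC)

lemma eqOn_usphere_of_ae_eq {n : ℕ} {f : Euc n → ℝ} {c : ℝ} (hf : ContinuousOn f (usphere n))
    (h : ∀ᵐ u ∂smeas n, f u = c) : ∀ u ∈ usphere n, f u = c := by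
  intro u hu
  by_contra hne
  obtain ⟨ε, hε, hball⟩ := Metric.mem_nhdsWithin_iff.1 ((hf u hu).eventually_ne hne)
  have hnull : ∀ᵐ x ∂smeas n, x ∉ ball u ε := by
    filter_upwards [h, ae_smeas_of_forall fun x hx => hx] with x hfx hxS hxball
    exact hball ⟨hxball, hxS⟩ hfx
  exact (smeas_ball_pos hu hε).ne' (measure_eq_zero_iff_ae_notMem.2 hnull)

lemma integral_smeas_pos {n : ℕ} (hne : (usphere n).Nonempty) {f : Euc n → ℝ}
    (hf : ContinuousOn f (usphere n)) (hpos : ∀ u ∈ usphere n, 0 < f u) :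
    0 < ∫ u, f u ∂smeas n := by
  obtain ⟨u, hu⟩ := hne
  refine (integral_pos_iff_support_of_nonneg_ae (ae_smeas_of_forall fun x hx => (hpos x hx).le)
    (integrable_smeas hf)).2 ((smeas_ball_pos hu one_pos).trans_le (measure_mono_ae ?_))
  exact ae_smeas_of_forall fun x hx _ => (hpos x hx).ne'

-- radial functions of star bodies (the paper's `C⁺(S^{n-1})`) and the weights built from them
structure IsPosContOnSphere (n : ℕ) (f : Euc n → ℝ) : Prop where
  continuousOn : ContinuousOn f (usphere n)
  pos : ∀ u ∈ usphere n, 0 < f u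

namespace IsPosContOnSphere
variable {n : ℕ} {f g : Euc n → ℝ}

lemma mul (hf : IsPosContOnSphere n f) (hg : IsPosContOnSphere n g) :
    IsPosContOnSphere n fun u => f u * g u :=
  ⟨hf.continuousOn.mul hg.continuousOn, fun u hu => mul_pos (hf.pos u hu) (hg.pos u hu)⟩

lemma div (hf : IsPosContOnSphere n f) (hg : IsPosContOnSphere n g) :
    IsPosContOnSphere n fun u => f u / g u :=
  ⟨hf.continuousOn.div hg.continuousOn fun u hu => (hg.pos u hu).ne',
    fun u hu => div_pos (hf.pos u hu) (hg.pos u hu)⟩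

lemma rpow (hf : IsPosContOnSphere n f) (p : ℝ) : IsPosContOnSphere n fun u => f u ^ p :=
  ⟨hf.continuousOn.rpow_const fun u hu => .inl (hf.pos u hu).ne',
    fun u hu => Real.rpow_pos_of_pos (hf.pos u hu) p⟩

lemma integral_pos (hf : IsPosContOnSphere n f) (hne : (usphere n).Nonempty) :
    0 < ∫ u, f u ∂smeas n :=
  integral_smeas_pos hne hf.continuousOn hf.pos

end IsPosContOnSphere

section WeightedJensen
variable {n : ℕ} {w : Euc n → ℝ}

def weightedSmeas (n : ℕ) (w : Euc n → ℝ) : Measure (Euc n) :=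
  (smeas n).withDensity fun u => (w u).toNNReal

lemma aemeasurable_toNNReal_weight (hw : ContinuousOn w (usphere n)) :
    AEMeasurable (fun u => (w u).toNNReal) (smeas n) :=
  (hw.aemeasurable isClosed_sphere.measurableSet).real_toNNReal

lemma integral_weightedSmeas (hw : IsPosContOnSphere n w) (f : Euc n → ℝ) :
    ∫ u, f u ∂weightedSmeas n w = ∫ u, w u * f u ∂smeas n := by
  rw [weightedSmeas,
    integral_withDensity_eq_integral_smul₀ (aemeasurable_toNNReal_weight hw.continuousOn)]
  refine integral_congr_ae (ae_smeas_of_forall fun u hu => ?_)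
  simp [NNReal.smul_def, (hw.pos u hu).le]

lemma average_weightedSmeas (hw : IsPosContOnSphere n w) (f : Euc n → ℝ) :
    ⨍ u, f u ∂weightedSmeas n w = (∫ u, w u * f u ∂smeas n) / ∫ u, w u ∂smeas n := by
  have hmass := integral_weightedSmeas hw fun _ => 1
  rw [integral_const, smul_eq_mul, mul_one] at hmass
  simp only [mul_one] at hmass
  rw [average_eq, integral_weightedSmeas hw, hmass, smul_eq_mul, inv_mul_eq_div]

lemma isFiniteMeasure_weightedSmeas (hw : ContinuousOn w (usphere n)) :
    IsFiniteMeasure (weightedSmeas n w) :=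
  isFiniteMeasure_withDensity_ofReal (integrable_smeas hw).hasFiniteIntegral

lemma ae_weightedSmeas_of_forall {p : Euc n → Prop} (h : ∀ u ∈ usphere n, p u) :
    ∀ᵐ u ∂weightedSmeas n w, p u :=
  (withDensity_absolutelyContinuous _ _).ae_le (ae_smeas_of_forall h)

lemma integrable_weightedSmeas (hw : IsPosContOnSphere n w) {f : Euc n → ℝ}
    (hf : ContinuousOn f (usphere n)) : Integrable f (weightedSmeas n w) := by
  rw [weightedSmeas,
    integrable_withDensity_iff_integrable_smul₀ (aemeasurable_toNNReal_weight hw.continuousOn)]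
  refine (integrable_smeas (hw.continuousOn.mul hf)).congr (ae_smeas_of_forall fun u hu => ?_)
  simp [NNReal.smul_def, (hw.pos u hu).le]

lemma absolutelyContinuous_weightedSmeas (hw : IsPosContOnSphere n w) :
    smeas n ≪ weightedSmeas n w :=
  withDensity_absolutelyContinuous'
    (aemeasurable_toNNReal_weight hw.continuousOn).coe_nnreal_ennreal
    (ae_smeas_of_forall fun u hu => by simpa using hw.pos u hu)

lemma exists_Icc_subset_mapsTo_usphere (hne : (usphere n).Nonempty) {f : Euc n → ℝ}
    (hf : ContinuousOn f (usphere n)) {s : Set ℝ} (hs : Convex ℝ s) (hfs : MapsTo f (usphere n) s) :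
    ∃ a b, Icc a b ⊆ s ∧ MapsTo f (usphere n) (Icc a b) := by
  obtain ⟨x, hx, hmin⟩ := (isCompact_sphere (0 : Euc n) 1).exists_isMinOn hne hf
  obtain ⟨y, hy, hmax⟩ := (isCompact_sphere (0 : Euc n) 1).exists_isMaxOn hne hf
  exact ⟨f x, f y, hs.ordConnected.out (hfs hx) (hfs hy), fun u hu => ⟨hmin hu, hmax hu⟩⟩

theorem ConvexOn.map_weighted_average_le_usphere {s : Set ℝ} {g : ℝ → ℝ} (hg : ConvexOn ℝ s g)
    (hgc : ContinuousOn g s) (hne : (usphere n).Nonempty) (hw : IsPosContOnSphere n w)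
    {f : Euc n → ℝ} (hf : ContinuousOn f (usphere n)) (hfs : MapsTo f (usphere n) s) :
    g ((∫ u, w u * f u ∂smeas n) / ∫ u, w u ∂smeas n)
      ≤ (∫ u, w u * g (f u) ∂smeas n) / ∫ u, w u ∂smeas n := by
  obtain ⟨a, b, hab, hfab⟩ := exists_Icc_subset_mapsTo_usphere hne hf hg.1 hfs
  have := isFiniteMeasure_weightedSmeas hw.continuousOn
  have : NeZero (weightedSmeas n w) := ⟨fun h0 => by
    obtain ⟨u, hu⟩ := hne
    refine (smeas_ball_pos hu one_pos).ne' (absolutelyContinuous_weightedSmeas hw ?_)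
    simp [h0]⟩
  have hjensen := (hg.subset hab (convex_Icc a b)).map_average_le (hgc.mono hab) isClosed_Icc
    (ae_weightedSmeas_of_forall hfab) (integrable_weightedSmeas hw hf)
    (integrable_weightedSmeas hw (hgc.comp hf hfs))
  rwa [average_weightedSmeas hw, average_weightedSmeas hw] at hjensen

theorem StrictConvexOn.eqOn_of_weighted_average_le_usphere {s : Set ℝ} {g : ℝ → ℝ}
    (hg : StrictConvexOn ℝ s g) (hgc : ContinuousOn g s) (hw : IsPosContOnSphere n w)
    {f : Euc n → ℝ} (hf : ContinuousOn f (usphere n)) (hfs : MapsTo f (usphere n) s)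
    (hle : (∫ u, w u * g (f u) ∂smeas n) / ∫ u, w u ∂smeas n
      ≤ g ((∫ u, w u * f u ∂smeas n) / ∫ u, w u ∂smeas n)) :
    ∀ u ∈ usphere n, f u = (∫ u, w u * f u ∂smeas n) / ∫ u, w u ∂smeas n := by
  intro u hu
  obtain ⟨a, b, hab, hfab⟩ := exists_Icc_subset_mapsTo_usphere ⟨u, hu⟩ hf hg.1 hfs
  have := isFiniteMeasure_weightedSmeas hw.continuousOn
  rcases (hg.subset hab (convex_Icc a b)).ae_eq_const_or_map_average_lt (hgc.mono hab)
    isClosed_Icc (ae_weightedSmeas_of_forall hfab) (integrable_weightedSmeas hw hf)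
    (integrable_weightedSmeas hw (hgc.comp hf hfs)) with hconst | hlt
  · rw [average_weightedSmeas hw] at hconst
    exact eqOn_usphere_of_ae_eq hf ((absolutelyContinuous_weightedSmeas hw).ae_le hconst) u hu
  · rw [average_weightedSmeas hw, average_weightedSmeas hw] at hlt
    exact absurd hle hlt.not_ge

end WeightedJensen

lemma ContinuousOn.comp_rpow_Ioi {φ : ℝ → ℝ} (hφ : ContinuousOn φ (Ioi 0)) (p : ℝ) :
    ContinuousOn (fun t => φ (t ^ p)) (Ioi 0) :=
  hφ.comp (continuousOn_id.rpow_const fun _ ht => .inl (ne_of_gt ht))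
    fun _ ht => Real.rpow_pos_of_pos ht p

theorem StrictConvexOn.eq_of_mul_map_div_le {g : ℝ → ℝ} (hg : StrictConvexOn ℝ (Ioi 0) g)
    {a b : ℝ} (ha : 0 < a) (hb : 0 < b) (hab : a * g (b / a) ≤ b * g 1)
    (hba : b * g (a / b) ≤ a * g 1) : a = b := by
  by_contra hne
  have hdiv : b / a ≠ a / b := by
    rw [Ne, div_eq_div_iff ha.ne' hb.ne']
    intro h
    exact hne (by nlinarith)
  -- `1` is the convex combination of `b / a` and `a / b` with weights `a / (a + b)`, `b / (a + b)`
  have hstrict := hg.2 (div_pos hb ha) (div_pos ha hb) hdiv (div_pos ha (add_pos ha hb))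
    (div_pos hb (add_pos ha hb)) (by rw [← add_div, div_self (add_pos ha hb).ne'])
  have hone : (a / (a + b)) • (b / a) + (b / (a + b)) • (a / b) = 1 := by
    simp only [smul_eq_mul]
    field_simp
    ring
  rw [hone, smul_eq_mul, smul_eq_mul, div_mul_eq_mul_div, div_mul_eq_mul_div, ← add_div,
    lt_div_iff₀ (add_pos ha hb)] at hstrict
  linarith

section DualOrliczMinkowski
variable {n : ℕ} {q : ℝ} {φ : ℝ → ℝ} {ρK ρL ρQ : Euc n → ℝ}

lemma Vqφ_const_mul_self (hK : ∀ u ∈ usphere n, ρK u ≠ 0) (α : ℝ) :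
    Vqφ n q φ ρK (fun u => α * ρK u) ρQ = φ α * Vq n q ρK ρQ := by
  rw [Vqφ, Vq, ← integral_const_mul, mul_left_comm, ← integral_const_mul, ← integral_const_mul]
  refine integral_congr_ae (ae_smeas_of_forall fun u hu => ?_)
  dsimp only
  rw [mul_div_assoc, div_self (hK u hu), mul_one]
  ring

lemma Vq_pos (hne : (usphere n).Nonempty) (hK : IsPosContOnSphere n ρK)
    (hQ : IsPosContOnSphere n ρQ) : 0 < Vq n q ρK ρQ :=
  mul_pos (by simpa using pos_of_usphere_nonempty hne)
    (((hK.rpow q).mul (hQ.rpow _)).integral_pos hne)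

lemma Vq_div_Vq_eq (hne : (usphere n).Nonempty) (hK : IsPosContOnSphere n ρK)
    (hL : IsPosContOnSphere n ρL) :
    Vq n q ρL ρQ / Vq n q ρK ρQ =
      (∫ u, ρK u ^ q * ρQ u ^ ((n : ℝ) - q) * (ρL u / ρK u) ^ q ∂smeas n) /
        ∫ u, ρK u ^ q * ρQ u ^ ((n : ℝ) - q) ∂smeas n := by
  have hn : (1 : ℝ) / n ≠ 0 := by simpa using (pos_of_usphere_nonempty hne).ne'
  rw [Vq, Vq, mul_div_mul_left _ _ hn]
  congr 1
  refine integral_congr_ae (ae_smeas_of_forall fun u hu => ?_)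
  have hKq : ρK u ^ q ≠ 0 := (Real.rpow_pos_of_pos (hK.pos u hu) q).ne'
  dsimp only
  rw [Real.div_rpow (hL.pos u hu).le (hK.pos u hu).le]
  field_simp

lemma Vqφ_div_Vq_eq (hne : (usphere n).Nonempty) (hq : q ≠ 0) (hK : IsPosContOnSphere n ρK)
    (hL : IsPosContOnSphere n ρL) :
    Vqφ n q φ ρK ρL ρQ / Vq n q ρK ρQ =
      (∫ u, ρK u ^ q * ρQ u ^ ((n : ℝ) - q) * φ (((ρL u / ρK u) ^ q) ^ (1 / q)) ∂smeas n) /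
        ∫ u, ρK u ^ q * ρQ u ^ ((n : ℝ) - q) ∂smeas n := by
  have hn : (1 : ℝ) / n ≠ 0 := by simpa using (pos_of_usphere_nonempty hne).ne'
  rw [Vqφ, Vq, mul_div_mul_left _ _ hn]
  congr 1
  refine integral_congr_ae (ae_smeas_of_forall fun u hu => ?_)
  dsimp only
  rw [one_div, Real.rpow_rpow_inv (div_pos (hL.pos u hu) (hK.pos u hu)).le hq]
  ring

theorem Vq_mul_le_Vqφ (hq : q ≠ 0) (hconv : ConvexOn ℝ (Ioi 0) fun t => φ (t ^ (1 / q)))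
    (hφ : ContinuousOn φ (Ioi 0)) (hne : (usphere n).Nonempty) (hK : IsPosContOnSphere n ρK)
    (hL : IsPosContOnSphere n ρL) (hQ : IsPosContOnSphere n ρQ) :
    Vq n q ρK ρQ * φ ((Vq n q ρL ρQ / Vq n q ρK ρQ) ^ (1 / q)) ≤ Vqφ n q φ ρK ρL ρQ := by
  have hf := (hL.div hK).rpow q
  rw [← le_div_iff₀' (Vq_pos hne hK hQ), Vq_div_Vq_eq hne hK hL, Vqφ_div_Vq_eq hne hq hK hL]
  exact hconv.map_weighted_average_le_usphere (hφ.comp_rpow_Ioi _) hne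
    ((hK.rpow q).mul (hQ.rpow _)) hf.continuousOn hf.pos

theorem eqOn_of_Vqφ_le (hq : q ≠ 0) (hconv : StrictConvexOn ℝ (Ioi 0) fun t => φ (t ^ (1 / q)))
    (hφ : ContinuousOn φ (Ioi 0)) (hK : IsPosContOnSphere n ρK) (hL : IsPosContOnSphere n ρL)
    (hQ : IsPosContOnSphere n ρQ)
    (hle : Vqφ n q φ ρK ρL ρQ ≤ Vq n q ρK ρQ * φ ((Vq n q ρL ρQ / Vq n q ρK ρQ) ^ (1 / q))) :
    ∀ u ∈ usphere n, (ρL u / ρK u) ^ q = Vq n q ρL ρQ / Vq n q ρK ρQ := by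
  intro u hu
  have hne : (usphere n).Nonempty := ⟨u, hu⟩
  have hf := (hL.div hK).rpow q
  rw [← div_le_iff₀' (Vq_pos hne hK hQ), Vq_div_Vq_eq hne hK hL, Vqφ_div_Vq_eq hne hq hK hL] at hle
  rw [Vq_div_Vq_eq hne hK hL]
  exact hconv.eqOn_of_weighted_average_le_usphere (hφ.comp_rpow_Ioi _)
    ((hK.rpow q).mul (hQ.rpow _)) hf.continuousOn hf.pos hle u hu

end DualOrliczMinkowski

theorem stmt8_general (n : ℕ) (q : ℝ) (hq : q ≠ 0) (φ : ℝ → ℝ)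
    (hφc : ContinuousOn φ (Ioi 0))
    (hconv : StrictConvexOn ℝ (Ioi 0) (fun t : ℝ => φ (t ^ (1/q))))
    (ρK ρL ρQ : Euc n → ℝ)
    (hρK : ContinuousOn ρK (usphere n)) (hρKpos : ∀ u ∈ usphere n, 0 < ρK u)
    (hρL : ContinuousOn ρL (usphere n)) (hρLpos : ∀ u ∈ usphere n, 0 < ρL u)
    (hρQ : ContinuousOn ρQ (usphere n)) (hρQpos : ∀ u ∈ usphere n, 0 < ρQ u)
    (heq : ∀ ρM : Euc n → ℝ, ContinuousOn ρM (usphere n) →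
      (∀ u ∈ usphere n, 0 < ρM u) →
      Vqφ n q φ ρK ρM ρQ = Vqφ n q φ ρL ρM ρQ) :
    ∀ u ∈ usphere n, ρK u = ρL u := by
  intro u hu
  have hK : IsPosContOnSphere n ρK := ⟨hρK, hρKpos⟩
  have hL : IsPosContOnSphere n ρL := ⟨hρL, hρLpos⟩
  have hQ : IsPosContOnSphere n ρQ := ⟨hρQ, hρQpos⟩
  have hself : ∀ ρ, IsPosContOnSphere n ρ → Vqφ n q φ ρ ρ ρQ = φ 1 * Vq n q ρ ρQ := fun ρ hρ => by
    simpa using Vqφ_const_mul_self (φ := φ) (ρQ := ρQ) (fun u hu => (hρ.pos u hu).ne') 1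
  have hKL : Vqφ n q φ ρK ρL ρQ = φ 1 * Vq n q ρL ρQ := (heq ρL hρL hρLpos).trans (hself ρL hL)
  have hLK : Vqφ n q φ ρL ρK ρQ = φ 1 * Vq n q ρK ρQ :=
    (heq ρK hρK hρKpos).symm.trans (hself ρK hK)
  have hVK := Vq_pos (q := q) ⟨u, hu⟩ hK hQ
  have hVL := Vq_pos (q := q) ⟨u, hu⟩ hL hQ
  have hV : Vq n q ρK ρQ = Vq n q ρL ρQ := by
    refine hconv.eq_of_mul_map_div_le hVK hVL ?_ ?_ <;> simp only [Real.one_rpow, mul_comm _ (φ 1)]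
    · exact (Vq_mul_le_Vqφ hq hconv.convexOn hφc ⟨u, hu⟩ hK hL hQ).trans_eq hKL
    · exact (Vq_mul_le_Vqφ hq hconv.convexOn hφc ⟨u, hu⟩ hL hK hQ).trans_eq hLK
  have hratio := eqOn_of_Vqφ_le hq hconv hφc hK hL hQ
    (by rw [hKL, ← hV, div_self hVK.ne', Real.one_rpow, mul_comm]) u hu
  rw [← hV, div_self hVK.ne'] at hratio
  have hdiv := Real.rpow_rpow_inv (div_pos (hL.pos u hu) (hK.pos u hu)).le hq
  rw [hratio, Real.one_rpow] at hdiv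
  exact ((div_eq_one_iff_eq (hK.pos u hu).ne').1 hdiv.symm).symm

theorem stmt8 (n : ℕ) (hn : 2 ≤ n) (q : ℝ) (hq : q ≠ 0) (φ : ℝ → ℝ)
    (hφc : ContinuousOn φ (Ioi 0)) (hφpos : ∀ t > (0:ℝ), 0 < φ t)
    (hconv : StrictConvexOn ℝ (Ioi 0) (fun t : ℝ => φ (t ^ (1/q))))
    (ρK ρL ρQ : Euc n → ℝ)
    (hρK : ContinuousOn ρK (usphere n)) (hρKpos : ∀ u ∈ usphere n, 0 < ρK u)
    (hρL : ContinuousOn ρL (usphere n)) (hρLpos : ∀ u ∈ usphere n, 0 < ρL u)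
    (hρQ : ContinuousOn ρQ (usphere n)) (hρQpos : ∀ u ∈ usphere n, 0 < ρQ u)
    (heq : ∀ ρM : Euc n → ℝ, ContinuousOn ρM (usphere n) →
      (∀ u ∈ usphere n, 0 < ρM u) →
      Vqφ n q φ ρK ρM ρQ = Vqφ n q φ ρL ρM ρQ) :
    ∀ u ∈ usphere n, ρK u = ρL u :=
  stmt8_general n q hq φ hφc hconv ρK ρL ρQ hρK hρKpos hρL hρLpos hρQ hρQpos heq
end
end

section
/- Let m, n ≥ 2, q > 0, let φ:[0,∞)^m→[0,∞) be continuous, strictly increasing in each component with φ(0)=0, φ(e_j)=1 and lim_{t→∞}φ(tx)=∞ for x≠0, and suppose φ_q(x) := φ(x_1^{1/q},…,x_m^{1/q}) is convex. Let G:(0,∞)×S^{n-1}→(0,∞) be continuous and suppose t ↦ G(t,u)/t^q is increasing for every u ∈ S^{n-1}. Let K_1,…,K_m be star bodies with strictly positive continuous radial functions, and let K = +̃_φ(K_1,…,K_m) be their radial Orlicz sum, defined pointwise by φ(ρ_{K_1}(u)/ρ_K(u),…,ρ_{K_m}(u)/ρ_K(u)) = 1. Then 1 ≥ φ( (Ṽ_G(K_1)/Ṽ_G(K))^{1/q},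 …, (Ṽ_G(K_m)/Ṽ_G(K))^{1/q} ), where Ṽ_G(M) = ∫_{S^{n-1}} G(ρ_M(u),u) du. -/
open MeasureTheory Metric Set Filter
open scoped RealInnerProductSpace NNReal ENNReal Topology

noncomputable section

/-!
Since `φ` is increasing and `φ(e_j) = 1`, the defining equation of the radial Orlicz sum forces
`ρ_{K_j} ≤ ρ_K`, and monotonicity of `G(t,u)/t^q` then gives
`Ṽ_G(K_j) ≤ ∫ G(ρ_K(u),u) (ρ_{K_j}(u)/ρ_K(u))^q du`. The right-hand side is `Ṽ_G(K)` times the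
mean of `x_j(u) = (ρ_{K_j}(u)/ρ_K(u))^q` for the probability measure `G(ρ_K(u),u) du / Ṽ_G(K)`.
Jensen's inequality for the convex function `φ_q` bounds `φ_q` of this mean by the mean of
`φ_q(x(u)) = 1`, and monotonicity of `φ` concludes.
-/

theorem ConvexOn.closure_of_continuousOn {E : Type*} [AddCommGroup E] [Module ℝ E]
    [TopologicalSpace E] [IsTopologicalAddGroup E] [ContinuousSMul ℝ E] {s : Set E} {f : E → ℝ}
    (hf : ConvexOn ℝ s f) (hfc : ContinuousOn f (closure s)) :
    ConvexOn ℝ (closure s) f := by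
  refine ⟨hf.1.closure, fun x hx y hy a b ha hb hab => ?_⟩
  have hcomb : Continuous fun p : E × E => a • p.1 + b • p.2 :=
    (continuous_fst.const_smul a).add (continuous_snd.const_smul b)
  have hprod : closure (s ×ˢ s) = closure s ×ˢ closure s := closure_prod_eq
  have hmaps : MapsTo (fun p : E × E => a • p.1 + b • p.2) (closure (s ×ˢ s)) (closure s) :=
    hprod ▸ fun p hp => hf.1.closure hp.1 hp.2 ha hb hab
  refine le_on_closure (s := s ×ˢ s) (fun p hp => hf.2 hp.1 hp.2 ha hb hab)
    (hfc.comp hcomb.continuousOn hmaps) ?_ (hprod ▸ mk_mem_prod hx hy)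
  rw [hprod]
  exact (continuousOn_const.mul (hfc.comp continuousOn_fst fun p hp => hp.1)).add
    (continuousOn_const.mul (hfc.comp continuousOn_snd fun p hp => hp.2))

lemma closure_setOf_forall_pos {ι : Type*} :
    closure {x : ι → ℝ | ∀ j, 0 < x j} = {x | ∀ j, 0 ≤ x j} := by
  simpa [Set.pi, closure_Ioi] using closure_pi_set univ fun _ : ι => Ioi (0 : ℝ)

section WithDensityOfReal

variable {α F : Type*} [MeasurableSpace α] {μ : Measure α} {w : α → ℝ}
  [NormedAddCommGroup F] [NormedSpace ℝ F]

lemma integral_withDensity_ofReal (hw : 0 ≤ᵐ[μ] w) (hwm : AEMeasurable w μ) (h : α → F) :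
    ∫ x, h x ∂μ.withDensity (fun x => ENNReal.ofReal (w x)) = ∫ x, w x • h x ∂μ := by
  rw [integral_withDensity_eq_integral_toReal_smul₀ hwm.ennreal_ofReal (by simp)]
  exact integral_congr_ae (hw.mono fun x hx => by simp only [ENNReal.toReal_ofReal hx])

lemma integrable_withDensity_ofReal_iff (hw : 0 ≤ᵐ[μ] w) (hwm : AEMeasurable w μ) {h : α → F} :
    Integrable h (μ.withDensity fun x => ENNReal.ofReal (w x)) ↔
      Integrable (fun x => w x • h x) μ := by
  rw [integrable_withDensity_iff_integrable_smul₀' hwm.ennreal_ofReal (by simp)]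
  exact integrable_congr (hw.mono fun x hx => by simp only [ENNReal.toReal_ofReal hx])

end WithDensityOfReal

theorem ConvexOn.map_weighted_average_le {α E : Type*} [MeasurableSpace α] {μ : Measure α}
    [NormedAddCommGroup E] [NormedSpace ℝ E] [CompleteSpace E] {s : Set E} {f : E → ℝ}
    {g : α → E} {w : α → ℝ} (hf : ConvexOn ℝ s f) (hfc : ContinuousOn f s) (hs : IsClosed s)
    (hw : 0 ≤ᵐ[μ] w) (hwi : Integrable w μ) (hw0 : 0 < ∫ x, w x ∂μ)
    (hgs : ∀ᵐ x ∂μ, g x ∈ s) (hgi : Integrable (fun x => w x • g x) μ)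
    (hfgi : Integrable (fun x => w x * f (g x)) μ) :
    f ((∫ x, w x ∂μ)⁻¹ • ∫ x, w x • g x ∂μ) ≤ (∫ x, w x ∂μ)⁻¹ * ∫ x, w x * f (g x) ∂μ := by
  set ν := μ.withDensity fun x => ENNReal.ofReal (w x)
  have hwm := hwi.1.aemeasurable
  have hν : ν univ = ENNReal.ofReal (∫ x, w x ∂μ) := by
    rw [withDensity_apply _ MeasurableSet.univ, Measure.restrict_univ,
      ofReal_integral_eq_lintegral_ofReal hwi hw]
  have : IsFiniteMeasure ν := ⟨by simp [hν]⟩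
  have : NeZero ν := ⟨fun h => by simp [h, eq_comm (a := (0 : ℝ≥0∞))] at hν; linarith⟩
  have hνs : ∀ᵐ x ∂ν, g x ∈ s := (withDensity_absolutelyContinuous _ _).ae_le hgs
  have := hf.map_average_le hfc hs hνs ((integrable_withDensity_ofReal_iff hw hwm).2 hgi)
    ((integrable_withDensity_ofReal_iff hw hwm).2 hfgi)
  rwa [average_eq, average_eq, measureReal_def, hν, ENNReal.toReal_ofReal hw0.le,
    integral_withDensity_ofReal hw hwm, integral_withDensity_ofReal hw hwm, smul_eq_mul] at this

section CoordinatewiseMonotone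

variable {ι : Type*} [Fintype ι] [DecidableEq ι] {φ : (ι → ℝ) → ℝ}

lemma monotoneOn_of_update_lt
    (hφ : ∀ x : ι → ℝ, (∀ j, 0 ≤ x j) → ∀ j, ∀ t : ℝ, x j < t →
      φ x < φ (Function.update x j t)) :
    MonotoneOn φ {x | ∀ j, 0 ≤ x j} := by
  intro x hx y hy hxy
  suffices ∀ S : Finset ι, φ x ≤ φ (S.piecewise y x) by simpa using this Finset.univ
  intro S
  induction S using Finset.induction_on with
  | empty => simp
  | insert a S ha ih =>
    have hz : ∀ j, 0 ≤ S.piecewise y x j := fun j => by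
      by_cases hj : j ∈ S <;> simp [Finset.piecewise, hj, hx j, hy j]
    rw [Finset.piecewise_insert]
    refine ih.trans ?_
    rcases (show S.piecewise y x a ≤ y a by simpa [ha] using hxy a).eq_or_lt with h | h
    · rw [← h, Function.update_eq_self]
    · exact (hφ _ hz a _ h).le

lemma le_one_of_apply_eq_one
    (hφ : ∀ x : ι → ℝ, (∀ j, 0 ≤ x j) → ∀ j, ∀ t : ℝ, x j < t →
      φ x < φ (Function.update x j t))
    {j : ι} (hφe : φ (fun k => if k = j then 1 else 0) = 1)
    {x : ι → ℝ} (hx : ∀ k, 0 ≤ x k) (hφx : φ x = 1) : x j ≤ 1 := by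
  by_contra! h
  have hx' : ∀ k, 0 ≤ Function.update x j 1 k := fun k => by
    by_cases hk : k = j <;> simp [hk, hx k]
  have hle : φ (fun k => if k = j then 1 else 0) ≤ φ (Function.update x j 1) :=
    monotoneOn_of_update_lt hφ (fun k => by split_ifs <;> norm_num) hx' fun k => by
      by_cases hk : k = j <;> simp [hk, hx k]
  have hlt := hφ _ hx' j (x j) (by simpa using h)
  rw [Function.update_idem, Function.update_eq_self] at hlt
  linarith

end CoordinatewiseMonotone

lemma le_mul_div_rpow_of_div_rpow_le {a b s t q : ℝ} (hs : 0 < s) (ht : 0 < t)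
    (h : a / s ^ q ≤ b / t ^ q) : a ≤ b * (s / t) ^ q := by
  have hsq := Real.rpow_pos_of_pos hs q
  calc a = a / s ^ q * s ^ q := by field_simp
    _ ≤ b / t ^ q * s ^ q := mul_le_mul_of_nonneg_right h hsq.le
    _ = b * (s / t) ^ q := by rw [Real.div_rpow hs.le ht.le]; ring

lemma continuousOn_comp_rpow {ι : Type*} {φ : (ι → ℝ) → ℝ}
    (hφc : ContinuousOn φ {x | ∀ j, 0 ≤ x j}) {p : ℝ} (hp : 0 ≤ p) :
    ContinuousOn (fun x : ι → ℝ => φ fun j => x j ^ p) {x | ∀ j, 0 ≤ x j} :=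
  hφc.comp (continuous_pi fun j => (Real.continuous_rpow_const hp).comp
    (continuous_apply j)).continuousOn fun _ hx j => Real.rpow_nonneg (hx j) _

theorem ConvexOn.map_weighted_average_le_of_ae_eq {X ι : Type*} [MeasurableSpace X] [Fintype ι]
    {μ : Measure X} {f : (ι → ℝ) → ℝ} (hf : ConvexOn ℝ {x | ∀ j, 0 < x j} f)
    (hfc : ContinuousOn f {x | ∀ j, 0 ≤ x j}) {w : X → ℝ} {g : X → ι → ℝ} {c : ℝ}
    (hw : 0 ≤ᵐ[μ] w) (hwi : Integrable w μ) (hw0 : 0 < ∫ u, w u ∂μ)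
    (hg : ∀ᵐ u ∂μ, ∀ j, 0 ≤ g u j) (hgi : ∀ j, Integrable (fun u => w u * g u j) μ)
    (hfg : ∀ᵐ u ∂μ, f (g u) = c) :
    f ((∫ u, w u ∂μ)⁻¹ • ∫ u, w u • g u ∂μ) ≤ c := by
  rw [← closure_setOf_forall_pos] at hfc
  have hgs : ∀ᵐ u ∂μ, g u ∈ closure {x : ι → ℝ | ∀ j, 0 < x j} := by
    rwa [closure_setOf_forall_pos]
  have hwfg : (fun u => w u * f (g u)) =ᵐ[μ] fun u => w u * c := by
    filter_upwards [hfg] with u hu using by rw [hu]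
  have := (hf.closure_of_continuousOn hfc).map_weighted_average_le hfc isClosed_closure hw hwi
    hw0 hgs (integrable_pi_iff.2 hgi) ((integrable_congr hwfg).2 (hwi.mul_const c))
  rwa [integral_congr_ae hwfg, integral_mul_const, inv_mul_cancel_left₀ hw0.ne'] at this

lemma integral_le_integral_mul_div_rpow {X : Type*} [MeasurableSpace X] {μ : Measure X}
    {q : ℝ} {G : ℝ → X → ℝ} {r R : X → ℝ} (hG0 : 0 ≤ᵐ[μ] fun u => G (r u) u)
    (hGq : ∀ᵐ u ∂μ, ∀ s t, 0 < s → s ≤ t → G s u / s ^ q ≤ G t u / t ^ q)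
    (hr : ∀ᵐ u ∂μ, 0 < r u) (hrR : ∀ᵐ u ∂μ, r u ≤ R u)
    (hi : Integrable (fun u => G (R u) u * (r u / R u) ^ q) μ) :
    ∫ u, G (r u) u ∂μ ≤ ∫ u, G (R u) u * (r u / R u) ^ q ∂μ := by
  refine integral_mono_of_nonneg hG0 hi ?_
  filter_upwards [hGq, hr, hrR] with u hGq hr hrR
  exact le_mul_div_rpow_of_div_rpow_le hr (hr.trans_le hrR) (hGq _ _ hr hrR)

theorem dual_orlicz_brunn_minkowski {X ι : Type*} [MeasurableSpace X] [Fintype ι] [DecidableEq ι]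
    {μ : Measure X} {q : ℝ} (hq : 0 < q) {φ : (ι → ℝ) → ℝ}
    (hφc : ContinuousOn φ {x : ι → ℝ | ∀ j, 0 ≤ x j})
    (hφmono : ∀ x : ι → ℝ, (∀ j, 0 ≤ x j) → ∀ j, ∀ t : ℝ, x j < t →
      φ x < φ (Function.update x j t))
    (hφ0 : φ 0 = 0) (hφe : ∀ j, φ (fun k => if k = j then 1 else 0) = 1)
    (hφq : ConvexOn ℝ {x : ι → ℝ | ∀ j, 0 < x j} fun x => φ fun j => x j ^ (1 / q))
    {G : ℝ → X → ℝ} {ρ : ι → X → ℝ} {ρS : X → ℝ}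
    (hρm : ∀ j, AEMeasurable (ρ j) μ) (hρSm : AEMeasurable ρS μ)
    (hG0 : ∀ᵐ u ∂μ, ∀ t > 0, 0 ≤ G t u)
    (hGq : ∀ᵐ u ∂μ, ∀ s t, 0 < s → s ≤ t → G s u / s ^ q ≤ G t u / t ^ q)
    (hρpos : ∀ᵐ u ∂μ, ∀ j, 0 < ρ j u) (hρSpos : ∀ᵐ u ∂μ, 0 < ρS u)
    (hsum : ∀ᵐ u ∂μ, φ (fun j => ρ j u / ρS u) = 1) :
    φ (fun j => ((∫ u, G (ρ j u) u ∂μ) / ∫ u, G (ρS u) u ∂μ) ^ (1 / q)) ≤ 1 := by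
  set w := fun u => G (ρS u) u
  set g : X → ι → ℝ := fun u j => (ρ j u / ρS u) ^ q
  set V := ∫ u, w u ∂μ
  have hw : 0 ≤ᵐ[μ] w := by
    filter_upwards [hG0, hρSpos] with u hG hρS using hG _ hρS
  -- `V = 0` happens only through the junk value of a non-integrable integral; then `x / V = 0`.
  rcases (integral_nonneg_of_ae hw : 0 ≤ V).eq_or_lt with hV | hV
  · have h0 : (fun j => ((∫ u, G (ρ j u) u ∂μ) / V) ^ (1 / q)) = 0 := by
      ext j
      rw [show V = 0 from hV.symm, div_zero, Real.zero_rpow (one_div_pos.2 hq).ne', Pi.zero_apply]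
    rw [h0, hφ0]
    exact zero_le_one
  have hwi : Integrable w μ := by
    by_contra h
    exact hV.ne' (integral_undef h)
  have hratio : ∀ᵐ u ∂μ, ∀ j, 0 ≤ ρ j u / ρS u ∧ ρ j u / ρS u ≤ 1 := by
    filter_upwards [hρpos, hρSpos, hsum] with u hρ hρS hφ j
    have hx : ∀ k, 0 ≤ ρ k u / ρS u := fun k => div_nonneg (hρ k).le hρS.le
    exact ⟨hx j, le_one_of_apply_eq_one hφmono (hφe j) hx hφ⟩
  have hwg : ∀ j, Integrable (fun u => w u * g u j) μ := fun j =>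
    hwi.mul_bdd (((hρm j).div hρSm).pow_const q).aestronglyMeasurable <| hratio.mono fun u hu => by
      simpa [g, abs_of_nonneg (Real.rpow_nonneg (hu j).1 q)] using
        Real.rpow_le_one (hu j).1 (hu j).2 hq.le
  have hφg : ∀ᵐ u ∂μ, φ (fun j => g u j ^ (1 / q)) = 1 := by
    filter_upwards [hρpos, hρSpos, hsum] with u hρ hρS hφ
    simp_rw [g, ← Real.rpow_mul (div_nonneg (hρ _).le hρS.le), mul_one_div_cancel hq.ne',
      Real.rpow_one, hφ]
  have hGj (j : ι) : 0 ≤ᵐ[μ] fun u => G (ρ j u) u := by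
    filter_upwards [hG0, hρpos] with u hG hρ using hG _ (hρ j)
  have hcomp : ∀ j, (∫ u, G (ρ j u) u ∂μ) / V ≤ (V⁻¹ • ∫ u, w u • g u ∂μ) j := by
    intro j
    rw [Pi.smul_apply, eval_integral (fun k => by simpa using hwg k), div_eq_inv_mul]
    refine mul_le_mul_of_nonneg_left (integral_le_integral_mul_div_rpow (hGj j) hGq
      (hρpos.mono fun u hu => hu j) ?_ (hwg j)) (by positivity)
    filter_upwards [hρSpos, hratio] with u hρS hu using (div_le_one hρS).1 (hu j).2
  have hlower : ∀ j, 0 ≤ (∫ u, G (ρ j u) u ∂μ) / V := fun j =>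
    div_nonneg (integral_nonneg_of_ae (hGj j)) hV.le
  refine le_trans (monotoneOn_of_update_lt hφmono ?_ ?_ ?_) <|
    hφq.map_weighted_average_le_of_ae_eq (continuousOn_comp_rpow hφc (by positivity)) hw hwi hV
      (hratio.mono fun u hu j => Real.rpow_nonneg (hu j).1 q) hwg hφg
  · exact fun j => Real.rpow_nonneg (hlower j) _
  · exact fun j => Real.rpow_nonneg ((hlower j).trans (hcomp j)) _
  · exact fun j => Real.rpow_le_rpow (hlower j) (hcomp j) (by positivity)

theorem stmt18_general (n m : ℕ) (q : ℝ) (hq : 0 < q)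
    (φ : (Fin m → ℝ) → ℝ)
    (hφc : ContinuousOn φ {x : Fin m → ℝ | ∀ j, 0 ≤ x j})
    (hφmono : ∀ x : Fin m → ℝ, (∀ j, 0 ≤ x j) → ∀ j, ∀ t : ℝ, x j < t →
      φ x < φ (Function.update x j t))
    (hφ0 : φ 0 = 0)
    (hφe : ∀ j : Fin m, φ (fun k => if k = j then 1 else 0) = 1)
    (hφq : ConvexOn ℝ {x : Fin m → ℝ | ∀ j, 0 < x j}
      (fun x : Fin m → ℝ => φ (fun j => x j ^ (1/q))))
    (G : ℝ → Euc n → ℝ)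
    (hGpos : ∀ t > (0:ℝ), ∀ u ∈ usphere n, 0 < G t u)
    (hGq : ∀ u ∈ usphere n, ∀ s t : ℝ, 0 < s → s ≤ t → G s u / s ^ q ≤ G t u / t ^ q)
    (ρ : Fin m → Euc n → ℝ)
    (hρc : ∀ j, ContinuousOn (ρ j) (usphere n))
    (hρpos : ∀ j, ∀ u ∈ usphere n, 0 < ρ j u)
    (ρS : Euc n → ℝ) (hρSc : ContinuousOn ρS (usphere n))
    (hρSpos : ∀ u ∈ usphere n, 0 < ρS u)
    (hsum : ∀ u ∈ usphere n, φ (fun j => ρ j u / ρS u) = 1) :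
    1 ≥ φ (fun j => ((∫ u, G (ρ j u) u ∂smeas n) / (∫ u, G (ρS u) u ∂smeas n)) ^ (1/q)) := by
  have hS : MeasurableSet (usphere n) := isClosed_sphere.measurableSet
  have hae : ∀ᵐ u ∂smeas n, u ∈ usphere n := ae_restrict_mem hS
  exact dual_orlicz_brunn_minkowski hq hφc hφmono hφ0 hφe hφq
    (fun j => ((hρc j).aestronglyMeasurable hS).aemeasurable)
    (hρSc.aestronglyMeasurable hS).aemeasurable
    (hae.mono fun u hu t ht => (hGpos t ht u hu).le) (hae.mono fun u hu => hGq u hu)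
    (hae.mono fun u hu j => hρpos j u hu) (hae.mono hρSpos) (hae.mono hsum)

theorem stmt18 (n m : ℕ) (hn : 2 ≤ n) (hm : 2 ≤ m) (q : ℝ) (hq : 0 < q)
    (φ : (Fin m → ℝ) → ℝ)
    (hφc : ContinuousOn φ {x : Fin m → ℝ | ∀ j, 0 ≤ x j})
    (hφmono : ∀ x : Fin m → ℝ, (∀ j, 0 ≤ x j) → ∀ j, ∀ t : ℝ, x j < t →
      φ x < φ (Function.update x j t))
    (hφ0 : φ 0 = 0)
    (hφe : ∀ j : Fin m, φ (fun k => if k = j then 1 else 0) = 1)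
    (hφtop : ∀ x : Fin m → ℝ, (∀ j, 0 ≤ x j) → x ≠ 0 →
      Tendsto (fun t : ℝ => φ (t • x)) atTop atTop)
    (hφq : ConvexOn ℝ {x : Fin m → ℝ | ∀ j, 0 < x j}
      (fun x : Fin m → ℝ => φ (fun j => x j ^ (1/q))))
    (G : ℝ → Euc n → ℝ)
    (hGcont : ContinuousOn (fun p : ℝ × Euc n => G p.1 p.2) (Ioi 0 ×ˢ usphere n))
    (hGpos : ∀ t > (0:ℝ), ∀ u ∈ usphere n, 0 < G t u)
    (hGq : ∀ u ∈ usphere n, ∀ s t : ℝ, 0 < s → s ≤ t → G s u / s ^ q ≤ G t u / t ^ q)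
    (ρ : Fin m → Euc n → ℝ)
    (hρc : ∀ j, ContinuousOn (ρ j) (usphere n))
    (hρpos : ∀ j, ∀ u ∈ usphere n, 0 < ρ j u)
    (ρS : Euc n → ℝ) (hρSc : ContinuousOn ρS (usphere n))
    (hρSpos : ∀ u ∈ usphere n, 0 < ρS u)
    (hsum : ∀ u ∈ usphere n, φ (fun j => ρ j u / ρS u) = 1) :
    1 ≥ φ (fun j => ((∫ u, G (ρ j u) u ∂smeas n) / (∫ u, G (ρS u) u ∂smeas n)) ^ (1/q)) :=
  stmt18_general n m q hq φ hφc hφmono hφ0 hφe hφq G hGpos hGq ρ hρc hρpos ρS hρSc hρSpos hsum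
end
end
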